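/- arXiv:math/0702454 — 5 statements merged into one kernel-verified Lean document; each statement's English description precedes it below -/
import Mathlib

section
/- For any two multi-hypersubstitutions ρ⁽¹⁾, ρ⁽²⁾ over a submonoid M of Hyp(τ) and every colored term ⟨t,α_t⟩, the extension of the composition equals the composition of extensions: (ρ⁽¹⁾ ∘_ch ρ⁽²⁾)‾[⟨t,α_t⟩] = ρ⁽¹⁾‾[ρ⁽²⁾‾[⟨t,α_t⟩]]. -/
/-- Terms of type τ: variables and applications of operation symbols. -/
inductive Tm (F : Type) (ar : F → ℕ) (X : Type) : Type where
  | var : X → Tm F ar X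
  | app : (f : F) → (Fin (ar f) → Tm F ar X) → Tm F ar X

namespace Tm

variable {F : Type} {ar : F → ℕ} {X Y : Type}

/-- Simultaneous substitution of terms for variables. -/
def subst (θ : X → Tm F ar Y) : Tm F ar X → Tm F ar Y
  | var x => θ x
  | app f ts => app f (fun i => subst θ (ts i))

/-- `isPos t p` : `p` is a position of the term `t`. -/
def isPos : Tm F ar X → List ℕ → Prop
  | _, [] => True
  | var _, _ :: _ => False
  | app f ts, i :: p => ∃ h : i < ar f, isPos (ts ⟨i, h⟩) p

/-- `replaceAt t p r` : positional composition `t(p; r)`, replacing the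
subterm of `t` at position `p` by `r`. -/
def replaceAt : Tm F ar X → List ℕ → Tm F ar X → Tm F ar X
  | _, [], r => r
  | var x, _ :: _, _ => var x
  | app f ts, i :: p, r => app f (fun j => if (j : ℕ) = i then replaceAt (ts j) p r else ts j)

end Tm

/-- A hypersubstitution assigns to each `n`-ary operation symbol an `n`-ary term. -/
def Hsub (F : Type) (ar : F → ℕ) : Type := (f : F) → Tm F ar (Fin (ar f))

namespace Tm
variable {F : Type} {ar : F → ℕ} {X : Type}

/-- Extension `σ̂` of a hypersubstitution to all terms. -/
def hApply (σ : Hsub F ar) : Tm F ar X → Tm F ar X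
  | var x => var x
  | app f ts => subst (fun i => hApply σ (ts i)) (σ f)

end Tm

/-- Composition of hypersubstitutions: `(σ₁ ∘ₕ σ₂)(f) = σ̂₁[σ₂(f)]`. -/
def hComp {F : Type} {ar : F → ℕ} (σ₁ σ₂ : Hsub F ar) : Hsub F ar :=
  fun f => Tm.hApply σ₁ (σ₂ f)

/-- The identity hypersubstitution `σ_id(f) = f(x₁,…,xₙ)`. -/
def hId {F : Type} {ar : F → ℕ} : Hsub F ar := fun f => Tm.app f (fun i => Tm.var i)

/-- `M` is a submonoid of `Hyp(τ)`. -/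
def IsHMonoid {F : Type} {ar : F → ℕ} (M : Set (Hsub F ar)) : Prop :=
  hId ∈ M ∧ ∀ σ₁ ∈ M, ∀ σ₂ ∈ M, hComp σ₁ σ₂ ∈ M

/-- Colored operation symbols `⟨f,q⟩`. -/
abbrev CF (F : Type) : Type := F × ℕ

abbrev car {F : Type} (ar : F → ℕ) : CF F → ℕ := fun fq => ar fq.1

/-- Colored terms of type τ: terms over colored operation symbols. -/
abbrev CTm (F : Type) (ar : F → ℕ) (X : Type) : Type := Tm (CF F) (car ar) X

namespace Tm
variable {F : Type} {ar : F → ℕ} {X : Type}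

/-- Color every operation symbol of a term with the color `q`. -/
def recolor (q : ℕ) : Tm F ar X → CTm F ar X
  | var x => var x
  | app f ts => app (f, q) (fun i => recolor q (ts i))

/-- Forget the colors of a colored term. -/
def forget : CTm F ar X → Tm F ar X
  | var x => var x
  | app fq ts => app fq.1 (fun i => forget (ts i))

/-- Equip the term `t` with the coloration `α : Pos(t) → ℕ` (given as a total
function on strings of naturals), obtaining the colored term `⟨t, α_t⟩`. -/
def colorWith (α : List ℕ → ℕ) : Tm F ar X → CTm F ar X
  | var x => var x
  | app f ts => app (f, α []) (fun i => colorWith (fun q => α (i.val :: q)) (ts i))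

end Tm

/-- A multi-hypersubstitution over `M` is a map `ρ : ℕ → M`. -/
def IsMh {F : Type} {ar : F → ℕ} (M : Set (Hsub F ar)) (ρ : ℕ → Hsub F ar) : Prop :=
  ∀ q, ρ q ∈ M

/-- Pointwise composition `∘_ch` of multi-hypersubstitutions. -/
def mComp {F : Type} {ar : F → ℕ} (ρ₁ ρ₂ : ℕ → Hsub F ar) : ℕ → Hsub F ar :=
  fun q => hComp (ρ₁ q) (ρ₂ q)

namespace Tm
variable {F : Type} {ar : F → ℕ} {X : Type}

/-- The extension `ρ‾` of a multi-hypersubstitution to colored terms: at a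
symbol `⟨f,q⟩` apply `ρ(q)`, coloring all new symbols with `q`. -/
def mhExt (ρ : ℕ → Hsub F ar) : CTm F ar X → CTm F ar X
  | var x => var x
  | app fq ts => subst (fun i => mhExt ρ (ts i)) (recolor fq.2 (ρ fq.2 fq.1))

end Tm

section Algebras
variable {F : Type} {ar : F → ℕ} {X : Type}

/-- Evaluation of a term in an interpretation of the operation symbols. -/
def Tm.eval {A : Type} (interp : (f : F) → (Fin (ar f) → A) → A) (env : X → A) :
    Tm F ar X → A
  | var x => env x
  | app f ts => interp f (fun i => Tm.eval interp env (ts i))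

/-- An algebra of type τ. -/
structure Alg (F : Type) (ar : F → ℕ) where
  carrier : Type
  interp : (f : F) → (Fin (ar f) → carrier) → carrier

/-- Identities of type τ (pairs of terms in variables `ℕ`). -/
abbrev Eqn (F : Type) (ar : F → ℕ) : Type := Tm F ar ℕ × Tm F ar ℕ

/-- `A ⊨ t ≈ s`. -/
def Alg.sat {F : Type} {ar : F → ℕ} (A : Alg F ar) (e : Eqn F ar) : Prop :=
  ∀ env : ℕ → A.carrier, Tm.eval A.interp env e.1 = Tm.eval A.interp env e.2

/-- The interpretation of colored symbols in the derived algebra `ρ[A]`: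
`⟨f,q⟩` is interpreted as the term operation `(ρ(q)(f))^A`. -/
def derivedInterp {A : Type} (ρ : ℕ → Hsub F ar)
    (interp : (f : F) → (Fin (ar f) → A) → A) :
    (fq : CF F) → (Fin (car ar fq) → A) → A :=
  fun fq as => Tm.eval interp (fun i => as i) (ρ fq.2 fq.1)

/-- The derived algebra `ρ[A]` (an algebra of the colored type). -/
def Alg.derived (A : Alg F ar) (ρ : ℕ → Hsub F ar) : Alg (CF F) (car ar) :=
  ⟨A.carrier, derivedInterp ρ A.interp⟩

end Algebras

section Identities
variable {F : Type} {ar : F → ℕ}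

/-- `ρ‾_{α_t}[t]` : the term obtained by applying the multi-hypersubstitution
`ρ` to `t` colored by `α`. -/
def mhImage (ρ : ℕ → Hsub F ar) (α : List ℕ → ℕ) (t : Tm F ar ℕ) : Tm F ar ℕ :=
  Tm.forget (Tm.mhExt ρ (Tm.colorWith α t))

/-- `χ_M[Σ]` : the hypersubstitution closure of a set of identities. -/
def hypClosure (M : Set (Hsub F ar)) (Sg : Set (Eqn F ar)) : Set (Eqn F ar) :=
  {e | ∃ t s σ, (t, s) ∈ Sg ∧ σ ∈ M ∧ e = (Tm.hApply σ t, Tm.hApply σ s)}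

/-- `χ_M^c[Σ]` : the multi-hypersubstitution closure of a set of identities. -/
def mhClosure (M : Set (Hsub F ar)) (Sg : Set (Eqn F ar)) : Set (Eqn F ar) :=
  {e | ∃ t s ρ αt αs, (t, s) ∈ Sg ∧ IsMh M ρ ∧
        e = (mhImage ρ αt t, mhImage ρ αs s)}

/-- `Id R` : the identities satisfied in all algebras of the class `R`. -/
def IdK (R : Set (Alg F ar)) : Set (Eqn F ar) := {e | ∀ A ∈ R, A.sat e}

/-- `Mod Σ` : the class of algebras satisfying all identities of `Σ`. -/
def ModK (Sg : Set (Eqn F ar)) : Set (Alg F ar) := {A | ∀ e ∈ Sg, A.sat e}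

/-- `HC_M Id R` : the `M`-multi-hyperidentities of the class `R`. -/
def HCId (M : Set (Hsub F ar)) (R : Set (Alg F ar)) : Set (Eqn F ar) :=
  {e | mhClosure M {e} ⊆ IdK R}

/-- `HC_M Mod Σ` : the algebras `M`-multi-hypersatisfying `Σ`. -/
def HCMod (M : Set (Hsub F ar)) (Sg : Set (Eqn F ar)) : Set (Alg F ar) :=
  {A | ∀ e ∈ mhClosure M Sg, A.sat e}

end Identities

theorem Tm.subst_subst {F : Type} {ar : F → ℕ} {X Y Z : Type}
    (χ : Y → Tm F ar Z) (η : X → Tm F ar Y) (s : Tm F ar X) :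
    Tm.subst χ (Tm.subst η s) = Tm.subst (fun x => Tm.subst χ (η x)) s := by
  induction s with
  | var x => rfl
  | app f ts ih => simp only [Tm.subst]; exact congrArg _ (funext ih)

theorem Tm.recolor_subst {F : Type} {ar : F → ℕ} {X Y : Type}
    (q : ℕ) (θ : X → Tm F ar Y) (s : Tm F ar X) :
    Tm.recolor q (Tm.subst θ s) =
      Tm.subst (fun x => Tm.recolor q (θ x)) (Tm.recolor q s) := by
  induction s with
  | var x => rfl
  | app f ts ih => simp only [Tm.subst, Tm.recolor]; exact congrArg _ (funext ih)

theorem Tm.mhExt_subst_recolor {F : Type} {ar : F → ℕ} {X Y : Type}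
    (ρ₁ : ℕ → Hsub F ar) (q : ℕ) (θ : X → CTm F ar Y) (t : Tm F ar X) :
    Tm.mhExt ρ₁ (Tm.subst θ (Tm.recolor q t)) =
      Tm.subst (fun x => Tm.mhExt ρ₁ (θ x))
        (Tm.recolor q (Tm.hApply (ρ₁ q) t)) := by
  induction t with
  | var x => rfl
  | app f ts ih =>
    simp only [Tm.recolor, Tm.subst, Tm.mhExt, Tm.hApply, Tm.recolor_subst,
      Tm.subst_subst]
    exact congrArg (fun θ' => Tm.subst θ' (Tm.recolor q (ρ₁ q f))) (funext ih)

/-- `(ρ⁽¹⁾ ∘_ch ρ⁽²⁾)‾[⟨t,α_t⟩] = ρ⁽¹⁾‾[ρ⁽²⁾‾[⟨t,α_t⟩]]`. -/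
theorem mhExt_mComp {F : Type} {ar : F → ℕ} {X : Type}
    (M : Set (Hsub F ar)) (hM : IsHMonoid M)
    (ρ₁ ρ₂ : ℕ → Hsub F ar) (h₁ : IsMh M ρ₁) (h₂ : IsMh M ρ₂)
    (ct : CTm F ar X) :
    Tm.mhExt (mComp ρ₁ ρ₂) ct = Tm.mhExt ρ₁ (Tm.mhExt ρ₂ ct) := by
  induction ct with
  | var x => rfl
  | app fq ts ih =>
    simp only [Tm.mhExt, mComp, hComp, Tm.mhExt_subst_recolor]
    exact congrArg (fun θ' => Tm.subst θ' _) (funext ih)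
end

section
/- For every algebra A of type τ, every multi-hypersubstitution ρ over a monoid M ⊆ Hyp(τ), and every colored term ⟨t,α_t⟩, the term operation induced by ⟨t,α_t⟩ on the derived algebra ρ[A] equals the term operation induced by ρ‾[⟨t,α_t⟩] on A: ⟨t,α_t⟩^{ρ[A]} = (ρ‾[⟨t,α_t⟩])^A. -/
private theorem eval_forget_subst_recolor {F : Type} {ar : F → ℕ} {X Y : Type}
    {C : Type} (interp : (f : F) → (Fin (ar f) → C) → C) (env : X → C)
    (θ : Y → CTm F ar X) (q : ℕ) (s : Tm F ar Y) :
    Tm.eval interp env (Tm.forget (Tm.subst θ (Tm.recolor q s))) =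
      Tm.eval interp (fun y => Tm.eval interp env (Tm.forget (θ y))) s := by
  induction s with
  | var x => rfl
  | app f ts ih =>
      simp only [Tm.recolor, Tm.subst, Tm.forget, Tm.eval]
      exact congrArg _ (funext fun i => ih i)

/-- `⟨t,α_t⟩^{ρ[A]} = (ρ‾[⟨t,α_t⟩])^A` : the term operation of a
colored term on the derived algebra equals the term operation of its image
under `ρ‾` on `A`. -/
theorem eval_derived {F : Type} {ar : F → ℕ} {X : Type}
    (M : Set (Hsub F ar)) (hM : IsHMonoid M)
    (A : Alg F ar) (ρ : ℕ → Hsub F ar) (hρ : IsMh M ρ)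
    (ct : CTm F ar X) (env : X → A.carrier) :
    Tm.eval (derivedInterp ρ A.interp) env ct =
      Tm.eval A.interp env (Tm.forget (Tm.mhExt ρ ct)) := by
  induction ct with
  | var x => rfl
  | app fq ts ih =>
      simp only [Tm.eval, Tm.mhExt, derivedInterp,
        eval_forget_subst_recolor A.interp env
          (fun i => Tm.mhExt ρ (ts i)) fq.2 (ρ fq.2 fq.1)]
      exact congrArg (fun g => Tm.eval A.interp g (ρ fq.2 fq.1)) (funext fun i => ih i)
end

section
/- For a multi-hypersubstitution ρ over a monoid M, terms t, s ∈ W_τ(X_n) with colorations α_t, α_s, a position p ∈ Pos(t), and any variable x_j with j > n, it holds that ρ‾[⟨t,α_t⟩(p; ⟨s,α_s⟩)] = ρ‾[⟨t,α_t⟩(p; x_j)](x_j ← ρ‾[⟨s,α_s⟩]): applying ρ‾ to a positional composition equals first replacing the position by a fresh variable, applying ρ‾, and then substituting the image of the replaced colored term for the fresh variable. -/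
namespace Tm
variable {F : Type} {ar : F → ℕ}

/-- `x` occurs as a variable of the term `t`. -/
def varOccurs (x : ℕ) : Tm F ar ℕ → Prop
  | var y => x = y
  | app _ ts => ∃ i, varOccurs x (ts i)

end Tm

/-- Inductive composition `u(x_j ← r)`: replace every occurrence of the
variable `x_j` by `r`. -/
def varSubst {F : Type} {ar : F → ℕ} (u : CTm F ar ℕ) (j : ℕ) (r : CTm F ar ℕ) :
    CTm F ar ℕ :=
  Tm.subst (fun x => if x = j then r else Tm.var x) u

namespace Tm
variable {F : Type} {ar : F → ℕ}

theorem subst_subst_s6 {X Y Z : Type} (θ₁ : X → Tm F ar Y) (θ₂ : Y → Tm F ar Z)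
    (u : Tm F ar X) : subst θ₂ (subst θ₁ u) = subst (fun x => subst θ₂ (θ₁ x)) u := by
  induction u with
  | var x => rfl
  | app f ts ih => simp only [subst]; exact congrArg _ (funext ih)

theorem not_varOccurs_subst {X : Type} (j : ℕ) (θ : X → Tm F ar ℕ)
    (u : Tm F ar X) (h : ∀ x, ¬ varOccurs j (θ x)) : ¬ varOccurs j (subst θ u) := by
  induction u with
  | var x => exact h x
  | app f ts ih => rintro ⟨i, hi⟩; exact ih i hi

theorem subst_eq_self (θ : ℕ → Tm F ar ℕ) (u : Tm F ar ℕ)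
    (h : ∀ x, varOccurs x u → θ x = var x) : subst θ u = u := by
  induction u with
  | var x => exact h x rfl
  | app f ts ih =>
    simp only [subst]
    exact congrArg _ (funext fun i => ih i (fun x hx => h x ⟨i, hx⟩))

theorem not_varOccurs_mhExt (ρ : ℕ → Hsub F ar) (j : ℕ) (u : CTm F ar ℕ)
    (h : ¬ varOccurs j u) : ¬ varOccurs j (mhExt ρ u) := by
  induction u with
  | var x => exact h
  | app fq ts ih =>
    exact not_varOccurs_subst j _ _ (fun i => ih i (fun hi => h ⟨i, hi⟩))

theorem varOccurs_colorWith {j : ℕ} (α : List ℕ → ℕ) (t : Tm F ar ℕ)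
    (h : varOccurs j (colorWith α t)) : varOccurs j t := by
  induction t generalizing α with
  | var x => exact h
  | app f ts ih => obtain ⟨i, hi⟩ := h; exact ⟨i, ih i _ hi⟩

theorem isPos_colorWith (α : List ℕ → ℕ) (t : Tm F ar ℕ) (p : List ℕ)
    (h : isPos t p) : isPos (colorWith α t) p := by
  induction p generalizing t α with
  | nil => cases t <;> trivial
  | cons i p ih =>
    cases t with
    | var x => exact absurd h id
    | app f ts =>
      obtain ⟨hlt, hp⟩ := h
      exact ⟨hlt, ih _ _ hp⟩

theorem mhExt_replaceAt_key (ρ : ℕ → Hsub F ar) (j : ℕ) (r : CTm F ar ℕ)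
    (p : List ℕ) :
    ∀ u : CTm F ar ℕ, ¬ varOccurs j u → isPos u p →
    mhExt ρ (u.replaceAt p r) =
      varSubst (mhExt ρ (u.replaceAt p (var j))) j (mhExt ρ r) := by
  induction p with
  | nil =>
    intro u _ _
    simp [replaceAt, varSubst, mhExt, subst]
  | cons i p ih =>
    intro u hu hp
    cases u with
    | var x => exact absurd hp id
    | app fq ts =>
      obtain ⟨hlt, hpos⟩ := hp
      simp only [replaceAt, mhExt, varSubst, subst_subst_s6]
      refine congrArg (fun θ => subst θ (recolor fq.2 (ρ fq.2 fq.1))) (funext fun k => ?_)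
      by_cases hk : (k : ℕ) = i
      · simp only [hk, if_pos rfl]
        have hk' : k = ⟨i, hlt⟩ := Fin.ext hk
        subst hk'
        exact ih (ts _) (fun h => hu ⟨_, h⟩) hpos
      · simp only [if_neg hk]
        refine (subst_eq_self _ _ (fun x hx => ?_)).symm
        have hj : ¬ varOccurs j (mhExt ρ (ts k)) :=
          not_varOccurs_mhExt ρ j _ (fun h => hu ⟨k, h⟩)
        rw [if_neg]
        rintro rfl
        exact hj hx

end Tm

/-- for `t, s ∈ W_τ(X_n)`, `p ∈ Pos(t)` and `j > n`,
`ρ‾[⟨t,α_t⟩(p; ⟨s,α_s⟩)] = ρ‾[⟨t,α_t⟩(p; x_j)](x_j ← ρ‾[⟨s,α_s⟩])`. -/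
theorem mhExt_replaceAt {F : Type} {ar : F → ℕ}
    (M : Set (Hsub F ar)) (hM : IsHMonoid M)
    (ρ : ℕ → Hsub F ar) (hρ : IsMh M ρ)
    (n : ℕ) (t s : Tm F ar ℕ)
    (ht : ∀ x, t.varOccurs x → x ≤ n) (hs : ∀ x, s.varOccurs x → x ≤ n)
    (αt αs : List ℕ → ℕ) (p : List ℕ) (hp : t.isPos p)
    (j : ℕ) (hj : j > n) :
    Tm.mhExt ρ ((Tm.colorWith αt t).replaceAt p (Tm.colorWith αs s)) =
      varSubst (Tm.mhExt ρ ((Tm.colorWith αt t).replaceAt p (Tm.var j))) j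
        (Tm.mhExt ρ (Tm.colorWith αs s)) := by
  exact Tm.mhExt_replaceAt_key ρ j (Tm.colorWith αs s) p (Tm.colorWith αt t)
    (fun h => absurd (ht j (Tm.varOccurs_colorWith αt t h)) (by omega))
    (Tm.isPos_colorWith αt t p hp)
end

section
/- Every M-multi-solid variety is M-solid; moreover the converse fails: the variety RB of rectangular bands (type (2), axiomatized by f(x₁,f(x₂,x₃)) ≈ f(f(x₁,x₂),x₃) ≈ f(x₁,x₃) and f(x₁,x₁) ≈ x₁) is solid but not M-multi-solid for the monoid M generated by σ₁(f)=f(x₂,x₁), σ₂(f)=f(f(x₂,x₁),x₂), σ₃(f)=f(x₁,x₂). -/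
/-- `K` is an `M`-solid variety: every identity of `K` is `M`-hypersatisfied. -/
def MSolid {F : Type} {ar : F → ℕ} (M : Set (Hsub F ar)) (K : Set (Alg F ar)) : Prop :=
  hypClosure M (IdK K) ⊆ IdK K

/-- `K` is an `M`-multi-solid variety: every identity of `K` is an
`M`-multi-hyperidentity. -/
def MMultiSolid {F : Type} {ar : F → ℕ} (M : Set (Hsub F ar)) (K : Set (Alg F ar)) : Prop :=
  mhClosure M (IdK K) ⊆ IdK K

/-- The submonoid of `Hyp(τ)` generated by a set `S` of hypersubstitutions. -/
inductive genM {F : Type} {ar : F → ℕ} (S : Set (Hsub F ar)) : Hsub F ar → Prop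
  | base {σ} : σ ∈ S → genM S σ
  | id : genM S hId
  | comp {σ₁ σ₂} : genM S σ₁ → genM S σ₂ → genM S (hComp σ₁ σ₂)

/-- The type (2) of one binary operation symbol. -/
abbrev ar2 : Unit → ℕ := fun _ => 2

/-- Binary application. -/
def bf {X : Type} (t s : Tm Unit ar2 X) : Tm Unit ar2 X := Tm.app () ![t, s]

/-- The axioms of rectangular bands:
`f(x₁,f(x₂,x₃)) ≈ f(f(x₁,x₂),x₃) ≈ f(x₁,x₃)` and `f(x₁,x₁) ≈ x₁`. -/
def RBAx : Set (Eqn Unit ar2) :=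
  { (bf (.var 0) (bf (.var 1) (.var 2)), bf (bf (.var 0) (.var 1)) (.var 2)),
    (bf (.var 0) (bf (.var 1) (.var 2)), bf (.var 0) (.var 2)),
    (bf (.var 0) (.var 0), .var 0) }

/-- The variety of rectangular bands. -/
def RB : Set (Alg Unit ar2) := ModK RBAx

/-- `σ₁(f) = f(x₂,x₁)`. -/
def sg1 : Hsub Unit ar2 := fun _ => bf (.var 1) (.var 0)
/-- `σ₂(f) = f(f(x₂,x₁),x₂)`. -/
def sg2 : Hsub Unit ar2 := fun _ => bf (bf (.var 1) (.var 0)) (.var 1)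
/-- `σ₃(f) = f(x₁,x₂)`. -/
def sg3 : Hsub Unit ar2 := fun _ => bf (.var 0) (.var 1)

section AuxLemmas

variable {F : Type} {ar : F → ℕ} {X Y : Type}

lemma forget_subst (θ : X → CTm F ar Y) (u : CTm F ar X) :
    Tm.forget (Tm.subst θ u) = Tm.subst (fun x => Tm.forget (θ x)) (Tm.forget u) := by
  induction u with
  | var x => rfl
  | app f ts ih => simp [Tm.subst, Tm.forget, ih]

lemma forget_recolor (q : ℕ) (u : Tm F ar X) :
    Tm.forget (Tm.recolor q u) = u := by
  induction u with
  | var x => rfl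
  | app f ts ih => simp [Tm.recolor, Tm.forget, ih]

lemma mhImage_const (σ : Hsub F ar) (t : Tm F ar ℕ) :
    ∀ α, mhImage (fun _ => σ) α t = Tm.hApply σ t := by
  induction t with
  | var x => intro α; rfl
  | app f ts ih =>
    intro α
    show Tm.forget (Tm.mhExt _ (Tm.colorWith α (.app f ts))) = _
    simp only [Tm.colorWith, Tm.mhExt, forget_subst, forget_recolor, Tm.hApply]
    congr 1
    funext i
    exact ih i _

def lmv {X : Type} : Tm Unit ar2 X → X
  | .var x => x
  | .app _ ts => lmv (ts 0)

def rmv {X : Type} : Tm Unit ar2 X → X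
  | .var x => x
  | .app _ ts => rmv (ts 1)

lemma lmv_subst (θ : X → Tm Unit ar2 Y) (w : Tm Unit ar2 X) :
    lmv (Tm.subst θ w) = lmv (θ (lmv w)) := by
  induction w with
  | var x => rfl
  | app f ts ih => simpa [Tm.subst, lmv] using ih 0

lemma rmv_subst (θ : X → Tm Unit ar2 Y) (w : Tm Unit ar2 X) :
    rmv (Tm.subst θ w) = rmv (θ (rmv w)) := by
  induction w with
  | var x => rfl
  | app f ts ih => simpa [Tm.subst, rmv] using ih 1

lemma fin2cases (i : Fin 2) : i = 0 ∨ i = 1 := by omega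

lemma lmv_hApply (σ : Hsub Unit ar2) (t : Tm Unit ar2 X) :
    lmv (Tm.hApply σ t) = if lmv (σ ()) = 0 then lmv t else rmv t := by
  induction t with
  | var x => simp [Tm.hApply, lmv, rmv]
  | app f ts ih =>
    simp only [Tm.hApply, lmv_subst, lmv, rmv]
    rcases fin2cases (lmv (σ ())) with h | h
    · rw [show (σ f) = (σ ()) from rfl, h]
      simpa [h] using ih 0
    · rw [show (σ f) = (σ ()) from rfl, h]
      simpa [h] using ih 1

lemma rmv_hApply (σ : Hsub Unit ar2) (t : Tm Unit ar2 X) :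
    rmv (Tm.hApply σ t) = if rmv (σ ()) = 0 then lmv t else rmv t := by
  induction t with
  | var x => simp [Tm.hApply, lmv, rmv]
  | app f ts ih =>
    simp only [Tm.hApply, rmv_subst, lmv, rmv]
    rcases fin2cases (rmv (σ ())) with h | h
    · rw [show (σ f) = (σ ()) from rfl, h]
      simpa [h] using ih 0
    · rw [show (σ f) = (σ ()) from rfl, h]
      simpa [h] using ih 1

lemma eval_proj0 {A : Type} (env : X → A) (t : Tm Unit ar2 X) :
    Tm.eval (fun (_ : Unit) (as : Fin 2 → A) => as 0) env t = env (lmv t) := by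
  induction t with
  | var x => rfl
  | app f ts ih => simpa [Tm.eval, lmv] using ih 0

lemma eval_proj1 {A : Type} (env : X → A) (t : Tm Unit ar2 X) :
    Tm.eval (fun (_ : Unit) (as : Fin 2 → A) => as 1) env t = env (rmv t) := by
  induction t with
  | var x => rfl
  | app f ts ih => simpa [Tm.eval, rmv] using ih 1

lemma eval_nf {A : Type} (interp : (f : Unit) → (Fin (ar2 f) → A) → A)
    (m : A → A → A) (hI : ∀ (f : Unit) (as : Fin 2 → A), interp f as = m (as 0) (as 1))
    (h1 : ∀ a b c, m a (m b c) = m a c) (h2 : ∀ a b c, m (m a b) c = m a c)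
    (h3 : ∀ a, m a a = a) (env : X → A) (t : Tm Unit ar2 X) :
    Tm.eval interp env t = m (env (lmv t)) (env (rmv t)) := by
  induction t with
  | var x => exact (h3 _).symm
  | app f ts ih =>
    simp only [Tm.eval, lmv, rmv, hI]
    rw [ih 0, ih 1, h2, h1]

lemma eval_bf {A X : Type} (interp : (f : Unit) → (Fin (ar2 f) → A) → A)
    (env : X → A) (t s : Tm Unit ar2 X) :
    Tm.eval interp env (bf t s) = interp () ![Tm.eval interp env t, Tm.eval interp env s] := by
  show interp () _ = _
  congr 1
  funext i
  fin_cases i <;> rfl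

lemma RB_props {A : Alg Unit ar2} (hA : A ∈ RB) :
    (∀ a b c, A.interp () ![a, A.interp () ![b, c]] = A.interp () ![a, c]) ∧
    (∀ a b c, A.interp () ![A.interp () ![a, b], c] = A.interp () ![a, c]) ∧
    (∀ a, A.interp () ![a, a] = a) := by
  have hx2 : (bf (.var 0) (bf (.var 1) (.var 2)), bf (.var 0) (.var 2)) ∈ RBAx := by
    simp [RBAx]
  have hx1 : (bf (.var 0) (bf (.var 1) (.var 2)), bf (bf (.var 0) (.var 1)) (.var 2)) ∈ RBAx := by
    simp [RBAx]
  have hx3 : ((bf (.var 0) (.var 0) : Tm Unit ar2 ℕ), .var 0) ∈ RBAx := by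
    simp [RBAx]
  have e2 : ∀ a b c, A.interp () ![a, A.interp () ![b, c]] = A.interp () ![a, c] := by
    intro a b c
    have := hA _ hx2 (fun n => if n = 0 then a else if n = 1 then b else c)
    simp only [eval_bf] at this
    simpa [Tm.eval] using this
  refine ⟨e2, ?_, ?_⟩
  · intro a b c
    have := hA _ hx1 (fun n => if n = 0 then a else if n = 1 then b else c)
    simp only [eval_bf] at this
    simp only [Tm.eval] at this
    norm_num at this
    rw [← this]
    exact e2 a b c
  · intro a
    have := hA _ hx3 (fun _ => a)
    simp only [eval_bf] at this
    simpa [Tm.eval] using this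

lemma interp_eq {A : Alg Unit ar2} (f : Unit) (as : Fin 2 → A.carrier) :
    A.interp f as = A.interp () ![as 0, as 1] := by
  have : (![as 0, as 1] : Fin 2 → A.carrier) = as := by
    funext i; fin_cases i <;> rfl
  rw [this]

lemma projAlg_mem (k : Fin 2) : (⟨ℕ, fun _ as => as k⟩ : Alg Unit ar2) ∈ RB := by
  intro e he
  simp only [RBAx, Set.mem_insert_iff, Set.mem_singleton_iff] at he
  rcases fin2cases k with rfl | rfl <;>
    rcases he with rfl | rfl | rfl <;> intro env <;> rfl

lemma IdK_RB_char (t s : Tm Unit ar2 ℕ) :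
    (t, s) ∈ IdK RB ↔ lmv t = lmv s ∧ rmv t = rmv s := by
  constructor
  · intro h
    constructor
    · have := h _ (projAlg_mem 0) id
      simpa [eval_proj0] using this
    · have := h _ (projAlg_mem 1) id
      simpa [eval_proj1] using this
  · rintro ⟨hl, hr⟩ A hA env
    obtain ⟨h1, h2, h3⟩ := RB_props hA
    rw [eval_nf A.interp (fun a b => A.interp () ![a, b]) interp_eq h1 h2 h3,
        eval_nf A.interp (fun a b => A.interp () ![a, b]) interp_eq h1 h2 h3,
        hl, hr]

end AuxLemmas

/-- every `M`-multi-solid variety is `M`-solid; the converse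
fails: `RB` is solid (`Hyp(τ)`-solid) but not `M`-multi-solid for the monoid
`M` generated by `σ₁, σ₂, σ₃`. -/


theorem multiSolid_solid_and_converse_fails :
    (∀ (F : Type) (ar : F → ℕ) (M : Set (Hsub F ar)) (K : Set (Alg F ar)),
        IsHMonoid M → K = ModK (IdK K) → MMultiSolid M K → MSolid M K) ∧
    MSolid (Set.univ : Set (Hsub Unit ar2)) RB ∧
    ¬ MMultiSolid {σ | genM {sg1, sg2, sg3} σ} RB := by
  refine ⟨?_, ?_, ?_⟩
  · intro F ar M K _hM _hK hMS e he
    obtain ⟨t, s, σ, hts, hσ, rfl⟩ := he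
    exact hMS ⟨t, s, fun _ => σ, fun _ => 0, fun _ => 0, hts, fun _ => hσ,
      by rw [mhImage_const, mhImage_const]⟩
  · intro e he
    obtain ⟨t, s, σ, hts, -, rfl⟩ := he
    have h := (IdK_RB_char t s).1 hts
    refine (IdK_RB_char _ _).2 ⟨?_, ?_⟩
    · rw [lmv_hApply, lmv_hApply, h.1, h.2]
    · rw [rmv_hApply, rmv_hApply, h.1, h.2]
  · intro hsub
    set t : Tm Unit ar2 ℕ := bf (bf (.var 0) (.var 1)) (bf (.var 0) (.var 1)) with ht
    set s : Tm Unit ar2 ℕ := bf (bf (.var 0) (.var 1)) (.var 1) with hs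
    set ρ : ℕ → Hsub Unit ar2 :=
      fun q => if q = 0 then sg1 else if q = 1 then sg2 else sg3 with hρdef
    have hρ : IsMh {σ | genM {sg1, sg2, sg3} σ} ρ := by
      intro q
      simp only [hρdef]
      split_ifs
      · exact genM.base (by simp)
      · exact genM.base (by simp)
      · exact genM.base (by simp)
    have hmem : (mhImage ρ (fun _ => 0) t,
        mhImage ρ (fun p => if p = [] then 1 else 2) s) ∈
        mhClosure {σ | genM {sg1, sg2, sg3} σ} (IdK RB) :=
      ⟨t, s, ρ, _, _, (IdK_RB_char t s).2 ⟨rfl, rfl⟩, hρ, rfl⟩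
    have h2 := ((IdK_RB_char _ _).1 (hsub hmem)).2
    have e1 : rmv (mhImage ρ (fun _ => 0) t) = 0 := by rfl
    have e2 : rmv (mhImage ρ (fun p => if p = [] then 1 else 2) s) = 1 := by rfl
    rw [e1, e2] at h2
    exact absurd h2 (by omega)
end

section
/- For every set Σ ⊆ Id(τ) and identity t≈s: Σ ⊨_Mh t≈s if and only if Mh(Σ) ⊨ t≈s, where Mh(Σ) is the smallest Mh-deductively closed set containing Σ. -/
/-- `Mh`-deduction: the rules of equational logic (a fully invariant
congruence) together with the multi-hypersubstitution rule `Mh₁`. -/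
inductive MhDed {F : Type} {ar : F → ℕ} (M : Set (Hsub F ar)) (Sg : Set (Eqn F ar)) :
    Tm F ar ℕ → Tm F ar ℕ → Prop
  | ax {t s} : (t, s) ∈ Sg → MhDed M Sg t s
  | refl (t) : MhDed M Sg t t
  | symm {t s} : MhDed M Sg t s → MhDed M Sg s t
  | trans {t s r} : MhDed M Sg t s → MhDed M Sg s r → MhDed M Sg t r
  | subst {t s} (θ : ℕ → Tm F ar ℕ) :
      MhDed M Sg t s → MhDed M Sg (Tm.subst θ t) (Tm.subst θ s)
  | replace {t s} (r : Tm F ar ℕ) (p : List ℕ) : r.isPos p → MhDed M Sg t s →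
      MhDed M Sg (r.replaceAt p t) (r.replaceAt p s)
  | mh {t s} (ρ : ℕ → Hsub F ar) (αt αs : List ℕ → ℕ) : IsMh M ρ → MhDed M Sg t s →
      MhDed M Sg (mhImage ρ αt t) (mhImage ρ αs s)

/-- `Mh(Σ)` : the `Mh`-deductive closure of `Σ` (the smallest
`Mh`-deductively closed set containing `Σ`). -/
def MhSet {F : Type} {ar : F → ℕ} (M : Set (Hsub F ar)) (Sg : Set (Eqn F ar)) :
    Set (Eqn F ar) :=
  {e | MhDed M Sg e.1 e.2}

section Aux

variable {F : Type} {ar : F → ℕ} {M : Set (Hsub F ar)} {Sg : Set (Eqn F ar)}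

/-- Congruence of `MhDed` under `app`, via the replacement rule. -/
lemma mhDed_app_aux (f : F) (us vs : Fin (ar f) → Tm F ar ℕ)
    (h : ∀ i, MhDed M Sg (us i) (vs i)) :
    ∀ n : ℕ, MhDed M Sg (Tm.app f us)
      (Tm.app f (fun i => if (i : ℕ) < n then vs i else us i)) := by
  intro n
  induction n with
  | zero =>
    have : (fun i : Fin (ar f) => if (i : ℕ) < 0 then vs i else us i) = us := by
      funext i; simp
    rw [this]; exact MhDed.refl _
  | succ n ih =>
    by_cases hn : n < ar f
    · have hrep := MhDed.replace (M := M) (Sg := Sg)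
        (Tm.app f (fun i => if (i : ℕ) < n then vs i else us i)) [n]
        ⟨hn, by simp [Tm.isPos]⟩ (h ⟨n, hn⟩)
      have e1 : (Tm.app f (fun i => if (i : ℕ) < n then vs i else us i)).replaceAt [n]
          (us ⟨n, hn⟩) = Tm.app f (fun i => if (i : ℕ) < n then vs i else us i) := by
        show Tm.app f _ = _
        congr 1
        funext j
        by_cases hj : (j : ℕ) = n
        · have : j = ⟨n, hn⟩ := Fin.ext hj
          subst this
          simp [Tm.replaceAt]
        · simp [Tm.replaceAt, hj]
      have e2 : (Tm.app f (fun i => if (i : ℕ) < n then vs i else us i)).replaceAt [n]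
          (vs ⟨n, hn⟩) = Tm.app f (fun i => if (i : ℕ) < n + 1 then vs i else us i) := by
        show Tm.app f _ = _
        congr 1
        funext j
        by_cases hj : (j : ℕ) = n
        · have : j = ⟨n, hn⟩ := Fin.ext hj
          subst this
          simp [Tm.replaceAt]
        · have : ((j : ℕ) < n + 1) ↔ ((j : ℕ) < n) := by omega
          simp [Tm.replaceAt, hj, this]
      rw [e1, e2] at hrep
      exact MhDed.trans ih hrep
    · have : (fun i : Fin (ar f) => if (i : ℕ) < n + 1 then vs i else us i)
          = (fun i : Fin (ar f) => if (i : ℕ) < n then vs i else us i) := by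
        funext i
        have hi : (i : ℕ) < ar f := i.isLt
        have h1 : (i : ℕ) < n := by omega
        simp [h1, Nat.lt_succ_of_lt h1]
      rw [this]; exact ih

lemma mhDed_app (f : F) (us vs : Fin (ar f) → Tm F ar ℕ)
    (h : ∀ i, MhDed M Sg (us i) (vs i)) :
    MhDed M Sg (Tm.app f us) (Tm.app f vs) := by
  have := mhDed_app_aux f us vs h (ar f)
  have e : (fun i : Fin (ar f) => if (i : ℕ) < ar f then vs i else us i) = vs := by
    funext i; simp [i.isLt]
  rwa [e] at this

lemma mhDed_subst_congr (θ θ' : ℕ → Tm F ar ℕ)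
    (h : ∀ n, MhDed M Sg (θ n) (θ' n)) :
    ∀ w : Tm F ar ℕ, MhDed M Sg (Tm.subst θ w) (Tm.subst θ' w) := by
  intro w
  induction w with
  | var x => exact h x
  | app f ts ih => exact mhDed_app f _ _ ih

lemma subst_var (w : Tm F ar ℕ) : Tm.subst Tm.var w = w := by
  induction w with
  | var x => rfl
  | app f ts ih => show Tm.app f _ = _; congr 1; funext i; exact ih i

/-- The setoid of `Mh`-provable equality. -/
def mhSetoid (M : Set (Hsub F ar)) (Sg : Set (Eqn F ar)) : Setoid (Tm F ar ℕ) :=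
  ⟨fun u v => MhDed M Sg u v, ⟨MhDed.refl, MhDed.symm, MhDed.trans⟩⟩

/-- The term algebra modulo `Mh(Σ)`. -/
noncomputable def freeAlg (M : Set (Hsub F ar)) (Sg : Set (Eqn F ar)) : Alg F ar :=
  ⟨Quotient (mhSetoid M Sg),
   fun f cs => Quotient.mk (mhSetoid M Sg) (Tm.app f (fun i => (cs i).out))⟩

lemma freeAlg_eval (env : ℕ → (freeAlg M Sg).carrier) (w : Tm F ar ℕ) :
    Tm.eval (freeAlg M Sg).interp env w
      = Quotient.mk (mhSetoid M Sg) (Tm.subst (fun n => (env n).out) w) := by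
  induction w with
  | var x =>
    show env x = _
    exact ((env x).out_eq).symm
  | app f ts ih =>
    show Quotient.mk (mhSetoid M Sg) (Tm.app f _) = _
    apply Quotient.sound
    apply mhDed_app
    intro i
    simp only [ih]
    exact Quotient.mk_out (s := mhSetoid M Sg) _

lemma freeAlg_models : ∀ e ∈ MhSet M Sg, (freeAlg M Sg).sat e := by
  rintro ⟨u, v⟩ he env
  rw [freeAlg_eval, freeAlg_eval]
  exact Quotient.sound (MhDed.subst _ he)

lemma freeAlg_complete {u v : Tm F ar ℕ} (h : (freeAlg M Sg).sat (u, v)) :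
    MhDed M Sg u v := by
  have henv := h (fun n => Quotient.mk (mhSetoid M Sg) (Tm.var n))
  replace henv := (freeAlg_eval (M := M) (Sg := Sg) _ u).symm.trans (henv.trans (freeAlg_eval _ v))
  have hd := Quotient.exact henv
  have hθ : ∀ n : ℕ, MhDed M Sg
      ((Quotient.mk (mhSetoid M Sg) (Tm.var n)).out) (Tm.var n) :=
    fun n => Quotient.mk_out (s := mhSetoid M Sg) _
  have hu : MhDed M Sg (Tm.subst (fun n => (Quotient.mk (mhSetoid M Sg) (Tm.var n)).out) u) u := by
    have := mhDed_subst_congr _ Tm.var hθ u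
    rwa [subst_var] at this
  have hv : MhDed M Sg (Tm.subst (fun n => (Quotient.mk (mhSetoid M Sg) (Tm.var n)).out) v) v := by
    have := mhDed_subst_congr _ Tm.var hθ v
    rwa [subst_var] at this
  exact MhDed.trans (MhDed.symm hu) (MhDed.trans hd hv)

lemma mhDed_cut {t s u v : Tm F ar ℕ} (hts : MhDed M Sg t s)
    (h : MhDed M {(t, s)} u v) : MhDed M Sg u v := by
  induction h with
  | ax hmem =>
    simp only [Set.mem_singleton_iff, Prod.mk.injEq] at hmem
    obtain ⟨h1, h2⟩ := hmem
    subst h1; subst h2; exact hts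
  | refl w => exact MhDed.refl w
  | symm _ ih => exact MhDed.symm ih
  | trans _ _ ih1 ih2 => exact MhDed.trans ih1 ih2
  | subst θ _ ih => exact MhDed.subst θ ih
  | replace r p hp _ ih => exact MhDed.replace r p hp ih
  | mh ρ αt αs hρ _ ih => exact MhDed.mh ρ αt αs hρ ih

end Aux

/-- `Σ ⊨_Mh t≈s ↔ Mh(Σ) ⊨ t≈s`. -/
theorem mhYields_iff_mhSet_yields {F : Type} {ar : F → ℕ}
    (M : Set (Hsub F ar)) (hM : IsHMonoid M)
    (Sg : Set (Eqn F ar)) (t s : Tm F ar ℕ) :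
    (∀ A : Alg F ar, (∀ e ∈ MhSet M Sg, A.sat e) →
        ∀ e ∈ MhSet M {(t, s)}, A.sat e) ↔
    (∀ A : Alg F ar, (∀ e ∈ MhSet M Sg, A.sat e) → A.sat (t, s)) := by
  constructor
  · intro h A hA
    exact h A hA (t, s) (MhDed.ax rfl)
  · intro h A hA e he
    have hts : MhDed M Sg t s := freeAlg_complete (h (freeAlg M Sg) freeAlg_models)
    exact hA e (mhDed_cut hts he)
end
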